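/- For every finite simple graph G, all complex roots of the Laplacian matching polynomial 𝓛𝓜(G, x) are nonnegative real numbers. -/

import Mathlib

/-!
Let `q(S) = mvMatchOn G x S` be the multivariate matching polynomial of `G[S]` at `x`. Deleting
`v ∈ S` gives `q(S) = x v * q(S - v) - ∑_{w ∈ S - v, w ~ v} q(S - v - w)`, so the ratios
`r(S, v) = q(S) / q(S - v)` satisfy `r(S, v) = x v - ∑_w r(S - v, w)⁻¹`, and `𝓛𝓜(G, z) = q(V)`
for `x v = z - d(v)`.

If `Im z > 0`, then `Im r⁻¹ < 0` whenever `Im r > 0`, so by induction `Im r(S, v) ≥ Im z > 0`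
and `q(V) ≠ 0`; conjugation handles `Im z < 0`. If `z < 0` is real, induction gives
`r(S, v) ≤ x v + #(N(v) ∩ (S - v))`. For `w ~ v` the vertex `v` is missing from `S - v`, so
`r(S - v, w) ≤ z - 1 < -1` and each `-r(S - v, w)⁻¹ ≤ 1`; hence `r(S, v) ≤ z < 0`, and again
`q(V) ≠ 0`.
-/

namespace LM

open Finset

variable {V : Type*}

/-- The set of matchings of `G`, as finsets of edges that pairwise share no vertex. -/
def matchings [Fintype V] [DecidableEq V] (G : SimpleGraph V) [DecidableRel G.Adj] :
    Finset (Finset (Sym2 V)) :=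
  G.edgeFinset.powerset.filter
    (fun M => ∀ e ∈ M, ∀ f ∈ M, e ≠ f → ∀ w : V, w ∈ e → w ∉ f)

/-- The set of vertices covered by a set of edges. -/
def covered [Fintype V] [DecidableEq V] (M : Finset (Sym2 V)) : Finset V :=
  Finset.univ.filter (fun v => ∃ e ∈ M, v ∈ e)

/-- The multivariate matching polynomial `𝔐(G, x_G)`. -/
noncomputable def mvMatch [Fintype V] [DecidableEq V] (G : SimpleGraph V)
    [DecidableRel G.Adj] : MvPolynomial V ℝ :=
  ∑ M ∈ matchings G, (-1 : MvPolynomial V ℝ) ^ M.card *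
    ∏ v ∈ Finset.univ \ covered M, MvPolynomial.X v

/-- The matching polynomial `𝓜(G, x)`. -/
noncomputable def matchPoly [Fintype V] [DecidableEq V] (G : SimpleGraph V)
    [DecidableRel G.Adj] : Polynomial ℝ :=
  ∑ M ∈ matchings G, (-1 : Polynomial ℝ) ^ M.card *
    Polynomial.X ^ (Fintype.card V - 2 * M.card)

/-- The Laplacian matching polynomial `𝓛𝓜(G, x)`. -/
noncomputable def lapMatch [Fintype V] [DecidableEq V] (G : SimpleGraph V)
    [DecidableRel G.Adj] : Polynomial ℝ :=
  ∑ M ∈ matchings G, (-1 : Polynomial ℝ) ^ M.card *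
    ∏ v ∈ Finset.univ \ covered M, (Polynomial.X - Polynomial.C (G.degree v : ℝ))

/-- The largest real root of a polynomial (`sSup` of its set of real roots). -/
noncomputable def lroot (p : Polynomial ℝ) : ℝ := sSup {x : ℝ | p.IsRoot x}

instance instDecidableRelInduceAdj (G : SimpleGraph V) [DecidableRel G.Adj] (s : Set V) :
    DecidableRel (G.induce s).Adj := fun a b =>
  inferInstanceAs (Decidable (G.Adj a b))

open Function

section Matchings

variable [Fintype V] [DecidableEq V]

lemma mem_covered {M : Finset (Sym2 V)} {w : V} : w ∈ covered M ↔ ∃ e ∈ M, w ∈ e := by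
  simp [covered]

lemma covered_insert (u v : V) (M : Finset (Sym2 V)) :
    covered (insert s(u, v) M) = insert u (insert v (covered M)) := by
  ext w
  simp only [mem_covered, mem_insert, exists_eq_or_imp, Sym2.mem_iff, or_assoc]

lemma insert_sdiff_covered_insert {u v : V} {S : Finset V} {M : Finset (Sym2 V)} (hu : u ∉ S) :
    insert u S \ covered (insert s(u, v) M) = S.erase v \ covered M := by
  rw [covered_insert, insert_sdiff_insert, sdiff_insert,
    erase_eq_of_notMem fun h => hu (mem_sdiff.1 h).1, sdiff_insert, erase_sdiff_comm]

variable {G : SimpleGraph V} [DecidableRel G.Adj]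

lemma mem_matchings {M : Finset (Sym2 V)} :
    M ∈ matchings G ↔ M ⊆ G.edgeFinset ∧ ∀ e ∈ M, ∀ f ∈ M, e ≠ f → ∀ w ∈ e, w ∉ f := by
  simp [matchings]

lemma mem_matchings_of_subset {M N : Finset (Sym2 V)} (hM : M ∈ matchings G) (hNM : N ⊆ M) :
    N ∈ matchings G := by
  rw [mem_matchings] at hM ⊢
  exact ⟨hNM.trans hM.1, fun e he f hf => hM.2 e (hNM he) f (hNM hf)⟩

lemma insert_mem_matchings {M : Finset (Sym2 V)} {u v : V} (hM : M ∈ matchings G)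
    (huv : G.Adj u v) (hu : u ∉ covered M) (hv : v ∉ covered M) :
    insert s(u, v) M ∈ matchings G := by
  rw [mem_matchings] at hM ⊢
  have hfree : ∀ f ∈ M, ∀ w ∈ s(u, v), w ∉ f := by
    rintro f hf w hw hwf
    rcases Sym2.mem_iff.1 hw with rfl | rfl
    exacts [hu (mem_covered.2 ⟨f, hf, hwf⟩), hv (mem_covered.2 ⟨f, hf, hwf⟩)]
  refine ⟨insert_subset (G.mem_edgeFinset.2 huv) hM.1, ?_⟩
  simp only [mem_insert, forall_eq_or_imp]
  refine ⟨⟨fun h => absurd rfl h, fun f hf _ => hfree f hf⟩,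
    fun e he => ⟨fun _ w hwe hwf => hfree e he w hwf hwe, hM.2 e he⟩⟩

def matchingsOn (G : SimpleGraph V) [DecidableRel G.Adj] (S : Finset V) :
    Finset (Finset (Sym2 V)) :=
  (matchings G).filter (covered · ⊆ S)

lemma mem_matchingsOn {S : Finset V} {M : Finset (Sym2 V)} :
    M ∈ matchingsOn G S ↔ M ∈ matchings G ∧ covered M ⊆ S :=
  mem_filter

lemma notMem_covered_of_mem_matchingsOn {S : Finset V} {M : Finset (Sym2 V)} {w : V}
    (hM : M ∈ matchingsOn G S) (hw : w ∉ S) : w ∉ covered M :=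
  fun h => hw ((mem_matchingsOn.1 hM).2 h)

lemma matchingsOn_univ : matchingsOn G univ = matchings G :=
  filter_true_of_mem fun _ _ => subset_univ _

lemma matchingsOn_empty : matchingsOn G ∅ = {∅} := by
  ext M
  simp only [mem_matchingsOn, subset_empty, mem_singleton]
  constructor
  · rintro ⟨-, hM⟩
    refine eq_empty_of_forall_notMem fun e he => ?_
    induction e using Sym2.ind with
    | _ u v => simpa [hM] using mem_covered.2 ⟨s(u, v), he, Sym2.mem_mk_left u v⟩
  · rintro rfl
    simp [matchings, covered]

lemma filter_notMem_covered_matchingsOn_insert {u : V} {S : Finset V} (hu : u ∉ S) :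
    (matchingsOn G (insert u S)).filter (u ∉ covered ·) = matchingsOn G S := by
  ext M
  simp only [mem_filter, mem_matchingsOn]
  constructor
  · rintro ⟨⟨hM, hMS⟩, huM⟩
    exact ⟨hM, fun w hw => (mem_insert.1 (hMS hw)).resolve_left (by rintro rfl; exact huM hw)⟩
  · rintro ⟨hM, hMS⟩
    exact ⟨⟨hM, hMS.trans (subset_insert u S)⟩, fun h => hu (hMS h)⟩

lemma filter_mem_covered_matchingsOn_insert {u : V} {S : Finset V} (hu : u ∉ S) :
    (matchingsOn G (insert u S)).filter (u ∈ covered ·) =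
      (S.filter (G.Adj u)).biUnion fun v =>
        (matchingsOn G (S.erase v)).image (insert s(u, v)) := by
  ext M
  simp only [mem_filter, mem_biUnion, mem_image, mem_matchingsOn]
  constructor
  · rintro ⟨⟨hM, hMS⟩, huM⟩
    obtain ⟨e, he, hue⟩ := mem_covered.1 huM
    obtain ⟨v, rfl⟩ := Sym2.mem_iff_exists.1 hue
    have huv : G.Adj u v := G.mem_edgeFinset.1 ((mem_matchings.1 hM).1 he)
    have hvS : v ∈ S :=
      (mem_insert.1 (hMS (mem_covered.2 ⟨_, he, Sym2.mem_mk_right u v⟩))).resolve_left huv.ne'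
    refine ⟨v, ⟨hvS, huv⟩, M.erase s(u, v), ⟨mem_matchings_of_subset hM (erase_subset _ _), ?_⟩,
      insert_erase he⟩
    intro w hw
    obtain ⟨f, hf, hwf⟩ := mem_covered.1 hw
    have hwe : w ∉ s(u, v) := fun hwe =>
      (mem_matchings.1 hM).2 _ he f (mem_of_mem_erase hf) (ne_of_mem_erase hf).symm w hwe hwf
    rcases mem_insert.1 (hMS (mem_covered.2 ⟨f, mem_of_mem_erase hf, hwf⟩)) with rfl | hwS
    · exact absurd (Sym2.mem_mk_left w v) hwe
    · exact mem_erase.2 ⟨fun h => hwe (h ▸ Sym2.mem_mk_right u w), hwS⟩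
  · rintro ⟨v, ⟨hvS, huv⟩, M', ⟨hM', hM'S⟩, rfl⟩
    have hu' : u ∉ covered M' := fun h => hu (mem_of_mem_erase (hM'S h))
    have hv' : v ∉ covered M' := fun h => notMem_erase v S (hM'S h)
    refine ⟨⟨insert_mem_matchings hM' huv hu' hv', ?_⟩, by simp [covered_insert]⟩
    rw [covered_insert]
    exact insert_subset_insert u (insert_subset hvS (hM'S.trans (erase_subset v S)))

lemma edge_notMem_of_mem_matchingsOn {S : Finset V} {M : Finset (Sym2 V)} {u : V}
    (hM : M ∈ matchingsOn G S) (hu : u ∉ S) (v : V) : s(u, v) ∉ M := fun h =>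
  notMem_covered_of_mem_matchingsOn hM hu (mem_covered.2 ⟨_, h, Sym2.mem_mk_left u v⟩)

lemma insert_inj_on_matchingsOn {S : Finset V} {M₁ M₂ : Finset (Sym2 V)} {u v : V} (hu : u ∉ S)
    (h₁ : M₁ ∈ matchingsOn G S) (h₂ : M₂ ∈ matchingsOn G S)
    (h : insert s(u, v) M₁ = insert s(u, v) M₂) : M₁ = M₂ := by
  rw [← erase_insert (edge_notMem_of_mem_matchingsOn h₁ hu v), h,
    erase_insert (edge_notMem_of_mem_matchingsOn h₂ hu v)]

lemma pairwise_disjoint_image_insert_matchingsOn {u : V} {S : Finset V} (hu : u ∉ S) :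
    Pairwise (Disjoint on (fun v => (matchingsOn G (S.erase v)).image (insert s(u, v)))) := by
  intro v w hvw
  refine disjoint_left.2 fun M hMv hMw => ?_
  obtain ⟨M₁, -, rfl⟩ := mem_image.1 hMv
  obtain ⟨M₂, hM₂, h⟩ := mem_image.1 hMw
  rcases mem_insert.1 (h ▸ mem_insert_self s(u, v) M₁) with huvw | huv
  · exact hvw (Sym2.congr_right.1 huvw)
  · exact edge_notMem_of_mem_matchingsOn hM₂ (fun h => hu (mem_of_mem_erase h)) v huv

end Matchings

section Recurrence

variable [Fintype V] [DecidableEq V] {R : Type*} [CommRing R]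

def mvMatchOn (G : SimpleGraph V) [DecidableRel G.Adj] (x : V → R) (S : Finset V) : R :=
  ∑ M ∈ matchingsOn G S, (-1) ^ #M * ∏ v ∈ S \ covered M, x v

variable {G : SimpleGraph V} [DecidableRel G.Adj]

lemma map_mvMatchOn {R' : Type*} [CommRing R'] (φ : R →+* R') (x : V → R) (S : Finset V) :
    φ (mvMatchOn G x S) = mvMatchOn G (φ ∘ x) S := by
  simp [mvMatchOn, map_sum, map_prod]

lemma mvMatchOn_empty (x : V → R) : mvMatchOn G x ∅ = 1 := by
  simp [mvMatchOn, matchingsOn_empty]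

lemma mvMatchOn_insert (x : V → R) {u : V} {S : Finset V} (hu : u ∉ S) :
    mvMatchOn G x (insert u S) =
      x u * mvMatchOn G x S - ∑ v ∈ S.filter (G.Adj u), mvMatchOn G x (S.erase v) := by
  have hu' : ∀ v, u ∉ S.erase v := fun v h => hu (mem_of_mem_erase h)
  rw [mvMatchOn, ← sum_filter_not_add_sum_filter _ (u ∈ covered ·),
    filter_notMem_covered_matchingsOn_insert hu, filter_mem_covered_matchingsOn_insert hu,
    sum_biUnion ((pairwise_disjoint_image_insert_matchingsOn hu).set_pairwise _),
    sub_eq_add_neg, mvMatchOn, mul_sum, ← sum_neg_distrib]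
  congr 1
  · refine sum_congr rfl fun M hM => ?_
    have huM := notMem_covered_of_mem_matchingsOn hM hu
    rw [insert_sdiff_of_notMem _ huM, prod_insert fun h => hu (mem_sdiff.1 h).1]
    ring
  · refine sum_congr rfl fun v _ => ?_
    rw [sum_image fun M₁ h₁ M₂ h₂ => insert_inj_on_matchingsOn (hu' v) h₁ h₂, mvMatchOn,
      ← sum_neg_distrib]
    refine sum_congr rfl fun M hM => ?_
    rw [card_insert_of_notMem (edge_notMem_of_mem_matchingsOn hM (hu' v) v),
      insert_sdiff_covered_insert hu]
    ring

end Recurrence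

section Degree

variable [Fintype V] {G : SimpleGraph V} [DecidableRel G.Adj]

lemma card_filter_adj_le_degree (T : Finset V) (v : V) :
    #(T.filter (G.Adj v)) ≤ G.degree v := by
  rw [← G.card_neighborFinset_eq_degree, G.neighborFinset_eq_filter]
  exact card_le_card (filter_subset_filter _ (subset_univ T))

lemma card_filter_adj_lt_degree {T : Finset V} {v w : V} (hw : w ∉ T) (hvw : G.Adj v w) :
    #(T.filter (G.Adj v)) < G.degree v := by
  rw [← G.card_neighborFinset_eq_degree, G.neighborFinset_eq_filter]
  refine card_lt_card ((ssubset_iff_of_subset (filter_subset_filter _ (subset_univ T))).2 ?_)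
  exact ⟨w, mem_filter.2 ⟨mem_univ w, hvw⟩, fun h => hw (mem_filter.1 h).1⟩

end Degree

section Roots

variable [Fintype V] [DecidableEq V] {G : SimpleGraph V} [DecidableRel G.Adj]

lemma mvMatchOn_div_erase {K : Type*} [Field K] (x : V → K) {v : V} {S : Finset V} (hv : v ∈ S)
    (hne : mvMatchOn G x (S.erase v) ≠ 0) :
    mvMatchOn G x S / mvMatchOn G x (S.erase v) = x v - ∑ w ∈ (S.erase v).filter (G.Adj v),
      (mvMatchOn G x (S.erase v) / mvMatchOn G x ((S.erase v).erase w))⁻¹ := by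
  have hrec := mvMatchOn_insert (G := G) x (notMem_erase v S)
  rw [insert_erase hv] at hrec
  simp only [hrec, sub_div, mul_div_cancel_right₀ _ hne, sum_div, inv_div]

lemma mvMatchOn_ne_zero_and_im_div_pos (x : V → ℂ) (hx : ∀ v, 0 < (x v).im) (S : Finset V) :
    mvMatchOn G x S ≠ 0 ∧ ∀ v ∈ S, 0 < (mvMatchOn G x S / mvMatchOn G x (S.erase v)).im := by
  induction S using Finset.strongInduction with
  | H S ih =>
  have hratio : ∀ v ∈ S, 0 < (mvMatchOn G x S / mvMatchOn G x (S.erase v)).im := by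
    intro v hv
    obtain ⟨hne, hpos⟩ := ih _ (erase_ssubset hv)
    have hinv : ∀ w ∈ (S.erase v).filter (G.Adj v),
        (mvMatchOn G x (S.erase v) / mvMatchOn G x ((S.erase v).erase w))⁻¹.im ≤ 0 := by
      intro w hw
      rw [Complex.inv_im]
      exact div_nonpos_of_nonpos_of_nonneg (neg_nonpos.2 (hpos w (mem_filter.1 hw).1).le)
        (Complex.normSq_nonneg _)
    rw [mvMatchOn_div_erase x hv hne, Complex.sub_im, Complex.im_sum]
    linarith [sum_nonpos hinv, hx v]
  refine ⟨?_, hratio⟩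
  rcases S.eq_empty_or_nonempty with rfl | ⟨v, hv⟩
  · simp [mvMatchOn_empty]
  · intro h
    simpa [h] using hratio v hv

lemma mvMatchOn_ne_zero_and_div_le (x : V → ℝ) (hx : ∀ v, x v + G.degree v < 0)
    (S : Finset V) :
    mvMatchOn G x S ≠ 0 ∧ ∀ v ∈ S,
      mvMatchOn G x S / mvMatchOn G x (S.erase v) ≤ x v + #((S.erase v).filter (G.Adj v)) := by
  induction S using Finset.strongInduction with
  | H S ih =>
  have hratio : ∀ v ∈ S,
      mvMatchOn G x S / mvMatchOn G x (S.erase v) ≤ x v + #((S.erase v).filter (G.Adj v)) := by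
    intro v hv
    obtain ⟨hne, hle⟩ := ih _ (erase_ssubset hv)
    have hinv : ∀ w ∈ (S.erase v).filter (G.Adj v),
        -(mvMatchOn G x (S.erase v) / mvMatchOn G x ((S.erase v).erase w))⁻¹ ≤ 1 := by
      intro w hw
      obtain ⟨hwS, hvw⟩ := mem_filter.1 hw
      have hdeg : (#(((S.erase v).erase w).filter (G.Adj w)) : ℝ) + 1 ≤ G.degree w :=
        mod_cast card_filter_adj_lt_degree (fun h => notMem_erase v S (mem_of_mem_erase h)) hvw.symm
      have hle_one : mvMatchOn G x (S.erase v) / mvMatchOn G x ((S.erase v).erase w) ≤ -1 := by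
        linarith [hle w hwS, hx w]
      rw [neg_le, ← inv_neg_one]
      exact (inv_le_inv_of_neg (by norm_num) (by linarith)).2 hle_one
    calc mvMatchOn G x S / mvMatchOn G x (S.erase v)
        = x v + ∑ w ∈ (S.erase v).filter (G.Adj v),
            -(mvMatchOn G x (S.erase v) / mvMatchOn G x ((S.erase v).erase w))⁻¹ := by
          rw [mvMatchOn_div_erase x hv hne, sum_neg_distrib, sub_eq_add_neg]
      _ ≤ x v + #((S.erase v).filter (G.Adj v)) := by
          simpa using sum_le_sum hinv
  refine ⟨?_, hratio⟩
  rcases S.eq_empty_or_nonempty with rfl | ⟨v, hv⟩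
  · simp [mvMatchOn_empty]
  · intro h
    have hdeg : (#((S.erase v).filter (G.Adj v)) : ℝ) ≤ G.degree v :=
      mod_cast card_filter_adj_le_degree _ v
    have := hratio v hv
    rw [h, zero_div] at this
    linarith [hx v]

end Roots

lemma eval_map_lapMatch [Fintype V] [DecidableEq V] (G : SimpleGraph V) [DecidableRel G.Adj]
    (z : ℂ) :
    ((lapMatch G).map (algebraMap ℝ ℂ)).eval z = mvMatchOn G (fun v => z - G.degree v) univ := by
  simp [lapMatch, mvMatchOn, matchingsOn_univ]

/-- All complex roots of the Laplacian matching polynomial `𝓛𝓜(G, x)`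
are nonnegative real numbers. -/
theorem lapMatch_roots_nonneg_real [Fintype V] [DecidableEq V] (G : SimpleGraph V)
    [DecidableRel G.Adj] (z : ℂ) (hz : ((lapMatch G).map (algebraMap ℝ ℂ)).IsRoot z) :
    ∃ r : ℝ, 0 ≤ r ∧ z = (r : ℂ) := by
  rw [Polynomial.IsRoot, eval_map_lapMatch] at hz
  rcases lt_trichotomy z.im 0 with him | him | him
  · have hz_conj : mvMatchOn G (fun v => (starRingEnd ℂ) z - G.degree v) univ = 0 := by
      simpa [map_mvMatchOn, Function.comp_def] using congrArg (starRingEnd ℂ) hz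
    exact absurd hz_conj
      (mvMatchOn_ne_zero_and_im_div_pos _ (fun v => by simpa using him) univ).1
  · have hz_re : z = (z.re : ℂ) := Complex.ext rfl (by simpa using him)
    refine ⟨z.re, le_of_not_gt fun hneg => ?_, hz_re⟩
    refine (mvMatchOn_ne_zero_and_div_le (G := G) (fun v => z.re - G.degree v)
      (fun v => by linarith) univ).1 (Complex.ofReal_injective ?_)
    rw [Complex.ofReal_zero, ← hz, ← Complex.ofRealHom_eq_coe, map_mvMatchOn]
    conv_rhs => rw [hz_re]
    simp [Function.comp_def]
  · exact absurd hz (mvMatchOn_ne_zero_and_im_div_pos _ (fun v => by simpa using him) univ).1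

end LM
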